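/- Let n ≥ 1 and let ℓ be a positive squarefree integer with ℓ ≡ 3 (mod 4), ℓ ≥ 2(n+1)(n+2)/n − 1, and n < (ℓ+1)/4; put d = (ℓ+1)/4. Let R = (ℤ/2ℤ)[X]/(X² + X + d) with ω the class of X (so R ≅ 𝔽₄ if d is odd and R ≅ 𝔽₂ × 𝔽₂ if d is even). If C₁ and C₂ are R-submodules of Rⁿ with swe_{C₁}(A_d, C_d, G_d) = swe_{C₂}(A_d, C_d, G_d) in ℤ[[q]], then swe_{C₁} = swe_{C₂} as polynomials. In other words, for such ℓ and n, the level-ℓ theta function of a length-n code determines its symmetrized weight enumerator uniquely. -/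

import Mathlib

set_option synthInstance.maxHeartbeats 400000
set_option maxHeartbeats 800000

noncomputable section

open Polynomial in
/-- The ring `R = (ℤ/2ℤ)[X]/(X² + X + d)`. -/
abbrev Rring (d : ℕ) : Type :=
  Polynomial (ZMod 2) ⧸ Ideal.span {(X : Polynomial (ZMod 2)) ^ 2 + X + C (d : ZMod 2)}

open Polynomial in
/-- `ω`, the class of `X` in `R`. -/
def omg (d : ℕ) : Rring d :=
  Ideal.Quotient.mk (Ideal.span {(X : Polynomial (ZMod 2)) ^ 2 + X + C (d : ZMod 2)}) X

/-- The symmetrized weight enumerator of a code `C ⊆ Rⁿ`: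
`swe_C(X,Y,Z) = ∑_{u ∈ C} X^{#{i : uᵢ = 0}} Y^{#{i : uᵢ = 1}} Z^{#{i : uᵢ ∈ {ω, 1+ω}}}`. -/
def swe {R : Type*} [CommRing R] (n : ℕ) (ω : R) (Co : Set (Fin n → R)) :
    MvPolynomial (Fin 3) ℤ :=
  ∑ i ∈ Finset.range (n + 1), ∑ j ∈ Finset.range (n + 1), ∑ k ∈ Finset.range (n + 1),
    (MvPolynomial.C
      ((Set.ncard {u ∈ Co |
        ({t : Fin n | u t = 0}.ncard = i ∧ {t : Fin n | u t = 1}.ncard = j ∧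
          {t : Fin n | u t = ω ∨ u t = 1 + ω}.ncard = k)}) : ℤ)) *
      (MvPolynomial.X 0 ^ i * MvPolynomial.X 1 ^ j * MvPolynomial.X 2 ^ k)

/-- The positive definite quadratic form `Q_d(x,y) = x² + xy + d y²`. -/
def Qform (d : ℕ) (x y : ℤ) : ℤ := x ^ 2 + x * y + (d : ℤ) * y ^ 2

/-- The coset theta series `θ^{(2,d)}_{a,b}`. -/
def cosetTheta (d : ℕ) (a b : ℤ) : PowerSeries ℤ :=
  PowerSeries.mk fun k =>
    (Set.ncard {mn : ℤ × ℤ |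
      Qform d (2 * mn.1 + a) (2 * mn.2 + b) = (k : ℤ)} : ℤ)

/-- `A_d = θ^{(2,d)}_{0,0}`. -/
def Az (d : ℕ) : PowerSeries ℤ := cosetTheta d 0 0
/-- `C_d = θ^{(2,d)}_{1,0}`. -/
def Cz (d : ℕ) : PowerSeries ℤ := cosetTheta d 1 0
/-- `G_d = θ^{(2,d)}_{0,1}`. -/
def Gz (d : ℕ) : PowerSeries ℤ := cosetTheta d 0 1

/-! Every word of `Rⁿ` has `n` coordinates, each equal to `0`, to `1`, or to one of `ω, 1 + ω`,
so `swe_C` is homogeneous of degree `n`. From `4 Q_d(x, y) = (2x + y)² + (4d - 1) y²` one reads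
off `A_d = 1 + O(q)`, `C_d = 2q + O(q²)` and `G_d = 2q^d + O(q^{d+1})`, so the monomial
`A_d^i C_d^j G_d^k` has order exactly `j + d k`. When `i + j + k = n < d` these orders are pairwise
distinct, and power series of pairwise distinct orders are linearly independent over `ℤ`; hence
evaluation at `(A_d, C_d, G_d)` is injective on homogeneous polynomials of degree `n`.
For `ℓ ≡ 3 (mod 4)` the bound `4n < ℓ + 1` is exactly `n < d`. -/
open PowerSeries in
theorem PowerSeries.linearIndepOn_of_injOn_order {R ι : Type*} [CommRing R] [NoZeroDivisors R]
    {f : ι → R⟦X⟧} {s : Set ι} (hf : ∀ i ∈ s, f i ≠ 0) (hs : s.InjOn fun i ↦ (f i).order) :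
    LinearIndepOn R f s := by
  classical
  rw [linearIndepOn_iff']
  intro t g hts hsum
  by_contra! hne
  obtain ⟨i, hit, hgi⟩ := hne
  obtain ⟨i₀, hi₀, hmin⟩ := (t.filter (g · ≠ 0)).exists_min_image (fun i ↦ (f i).order)
    ⟨i, Finset.mem_filter.mpr ⟨hit, hgi⟩⟩
  rw [Finset.mem_filter] at hi₀
  have hcoeff : coeff (f i₀).order.toNat (∑ i ∈ t, g i • f i) =
      g i₀ * coeff (f i₀).order.toNat (f i₀) := by
    rw [map_sum, Finset.sum_eq_single_of_mem i₀ hi₀.1]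
    · simp
    intro j hjt hji
    by_cases hgj : g j = 0
    · simp [hgj]
    have hlt : (f i₀).order < (f j).order :=
      lt_of_le_of_ne (hmin j (Finset.mem_filter.mpr ⟨hjt, hgj⟩))
        fun h ↦ hji (hs (hts hjt) (hts hi₀.1) h.symm)
    rw [map_smul, coeff_of_lt_order _ ((ENat.natCast_toNat_le_self _).trans_lt hlt), smul_zero]
  rw [hsum, map_zero] at hcoeff
  exact mul_ne_zero hi₀.2 (coeff_order (hf i₀ (hts hi₀.1))) hcoeff.symm

open PowerSeries in
lemma PowerSeries.order_pow_mul_pow_mul_pow {R : Type*} [CommRing R] [IsDomain R]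
    {a c g : R⟦X⟧} {d : ℕ} (ha : a.order = 0) (hc : c.order = 1) (hg : g.order = d)
    (i j k : ℕ) : (a ^ i * c ^ j * g ^ k).order = (j + d * k : ℕ) := by
  rw [order_mul, order_mul, order_pow, order_pow, order_pow, ha, hc, hg]
  push_cast
  simp [nsmul_eq_mul, mul_comm]

lemma Finsupp.eq_of_degree_eq_of_add_mul_eq {n d : ℕ} (hnd : n < d) {m m' : Fin 3 →₀ ℕ}
    (hm : m.degree = n) (hm' : m'.degree = n) (h : m 1 + d * m 2 = m' 1 + d * m' 2) :
    m = m' := by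
  rw [Finsupp.degree_eq_sum, Fin.sum_univ_three] at hm hm'
  have h1 : m 1 = m' 1 := by
    have := congrArg (· % d) h
    simpa [Nat.add_mul_mod_self_left, Nat.mod_eq_of_lt (show m 1 < d by omega),
      Nat.mod_eq_of_lt (show m' 1 < d by omega)] using this
  have h2 : m 2 = m' 2 := by
    rw [h1] at h
    exact mul_left_cancel₀ (by omega : d ≠ 0) (by omega)
  ext i
  fin_cases i <;> simp <;> omega

open PowerSeries in
theorem MvPolynomial.IsHomogeneous.eq_zero_of_aeval_eq_zero {R : Type*} [CommRing R] [IsDomain R]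
    {a c g : R⟦X⟧} {d n : ℕ} (ha : a.order = 0) (hc : c.order = 1) (hg : g.order = d)
    (hnd : n < d) {p : MvPolynomial (Fin 3) R} (hp : p.IsHomogeneous n)
    (h : MvPolynomial.aeval ![a, c, g] p = 0) : p = 0 := by
  set v : (Fin 3 →₀ ℕ) → R⟦X⟧ := fun m ↦ a ^ m 0 * c ^ m 1 * g ^ m 2
  have hv : LinearIndepOn R v {m | m.degree = n} := by
    refine linearIndepOn_of_injOn_order (fun m _ h0 ↦ ?_) fun m hm m' hm' hmm' ↦ ?_
    · have hord := order_pow_mul_pow_mul_pow ha hc hg (m 0) (m 1) (m 2)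
      rw [show a ^ m 0 * c ^ m 1 * g ^ m 2 = 0 from h0, order_zero] at hord
      exact ENat.top_ne_natCast _ hord
    · simp only [v, order_pow_mul_pow_mul_pow ha hc hg, Nat.cast_inj] at hmm'
      exact Finsupp.eq_of_degree_eq_of_add_mul_eq hnd hm hm' hmm'
  have hsum : MvPolynomial.aeval ![a, c, g] p = ∑ m ∈ p.support, p.coeff m • v m := by
    rw [aeval_def, eval₂_eq']
    simp [v, Fin.prod_univ_three, Algebra.smul_def, mul_assoc]
  have hsupp : (p.support : Set (Fin 3 →₀ ℕ)) ⊆ {m | m.degree = n} := fun m hm ↦ by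
    rw [Set.mem_ofPred_eq, Finsupp.degree_eq_weight_one]
    exact hp (mem_support_iff.mp hm)
  ext m
  by_cases hm : m ∈ p.support
  · exact linearIndepOn_iff'.mp hv _ _ hsupp (hsum ▸ h) m hm
  · simpa using hm

theorem Set.ncard_add_ncard_add_ncard_eq_card {ι : Type*} [Finite ι] {P Q S : ι → Prop}
    (hPQ : ∀ i, P i → ¬Q i) (hPS : ∀ i, P i → ¬S i) (hQS : ∀ i, Q i → ¬S i)
    (hcover : ∀ i, P i ∨ Q i ∨ S i) :
    {i | P i}.ncard + {i | Q i}.ncard + {i | S i}.ncard = Nat.card ι := by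
  have hPQ' : Disjoint {i | P i} {i | Q i} := Set.disjoint_left.mpr hPQ
  have hPQS : Disjoint ({i | P i} ∪ {i | Q i}) {i | S i} :=
    Set.disjoint_union_left.mpr ⟨Set.disjoint_left.mpr hPS, Set.disjoint_left.mpr hQS⟩
  rw [← Set.ncard_union_eq hPQ', ← Set.ncard_union_eq hPQS, ← Set.ncard_univ]
  congr
  ext i
  simpa [or_assoc] using hcover i

open MvPolynomial in
theorem isHomogeneous_swe {R : Type*} [CommRing R] {n : ℕ} {ω : R} {Co : Set (Fin n → R)}
    (hCo : ∀ u ∈ Co, {t | u t = 0}.ncard + {t | u t = 1}.ncard +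
      {t | u t = ω ∨ u t = 1 + ω}.ncard = n) :
    (swe n ω Co).IsHomogeneous n := by
  refine IsHomogeneous.sum _ _ _ fun i _ ↦ IsHomogeneous.sum _ _ _ fun j _ ↦
    IsHomogeneous.sum _ _ _ fun k _ ↦ ?_
  by_cases hijk : i + j + k = n
  · subst hijk
    exact (((isHomogeneous_X_pow 0 i).mul (isHomogeneous_X_pow 1 j)).mul
      (isHomogeneous_X_pow 2 k)).C_mul _
  · have hempty : {u ∈ Co | {t | u t = 0}.ncard = i ∧ {t | u t = 1}.ncard = j ∧
        {t | u t = ω ∨ u t = 1 + ω}.ncard = k} = ∅ :=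
      Set.eq_empty_of_forall_notMem fun u ⟨hu, hi, hj, hk⟩ ↦ hijk (hi ▸ hj ▸ hk ▸ hCo u hu)
    simpa [hempty] using isHomogeneous_zero (Fin 3) ℤ n

namespace Rring

open Polynomial

lemma natDegree_modulus (d : ℕ) :
    ((X : (ZMod 2)[X]) ^ 2 + X + C (d : ZMod 2)).natDegree = 2 := by
  compute_degree!

lemma mk_ne_zero {d : ℕ} {p : (ZMod 2)[X]} (hp0 : p ≠ 0) (hp : p.natDegree ≤ 1) :
    Ideal.Quotient.mk (Ideal.span {X ^ 2 + X + C (d : ZMod 2)}) p ≠ 0 := by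
  rw [Ne, Ideal.Quotient.eq_zero_iff_mem, Ideal.mem_span_singleton]
  exact fun h ↦ hp0 (eq_zero_of_dvd_of_natDegree_lt h (by rw [natDegree_modulus]; omega))

instance (d : ℕ) : Nontrivial (Rring d) :=
  ⟨⟨1, 0, by simpa using mk_ne_zero (d := d) one_ne_zero (by simp)⟩⟩

lemma omg_ne_zero (d : ℕ) : omg d ≠ 0 :=
  mk_ne_zero X_ne_zero natDegree_X_le

lemma omg_ne_one (d : ℕ) : omg d ≠ 1 := by
  rw [← sub_ne_zero]
  simpa [omg] using mk_ne_zero (d := d) (X_sub_C_ne_zero 1) (natDegree_X_sub_C_le 1)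

lemma one_add_omg_ne_zero (d : ℕ) : 1 + omg d ≠ 0 := by
  simpa [omg, add_comm] using mk_ne_zero (d := d) (X_add_C_ne_zero 1) (natDegree_X_add_C 1).le

lemma one_add_omg_ne_one (d : ℕ) : 1 + omg d ≠ 1 := by
  simpa using omg_ne_zero d

lemma eq_zero_or_eq_one_or_eq_omg_or_eq_one_add_omg {d : ℕ} (x : Rring d) :
    x = 0 ∨ x = 1 ∨ x = omg d ∨ x = 1 + omg d := by
  have hf : ((X : (ZMod 2)[X]) ^ 2 + X + C (d : ZMod 2)).Monic := by monicity!
  obtain ⟨p, rfl⟩ := Ideal.Quotient.mk_surjective x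
  have hmod : Ideal.Quotient.mk (Ideal.span {X ^ 2 + X + C (d : ZMod 2)}) p =
      Ideal.Quotient.mk _ (p %ₘ (X ^ 2 + X + C (d : ZMod 2))) := by
    rw [Ideal.Quotient.eq, Ideal.mem_span_singleton]
    exact ⟨p /ₘ _, sub_eq_iff_eq_add'.mpr (modByMonic_add_div p _).symm⟩
  rw [hmod]
  have hdeg := natDegree_modByMonic_lt p hf
    (ne_of_apply_ne natDegree (by rw [natDegree_modulus]; simp))
  rw [natDegree_modulus] at hdeg
  generalize p %ₘ _ = r at hdeg ⊢
  rw [eq_X_add_C_of_natDegree_le_one (by omega : r.natDegree ≤ 1)]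
  have hZ2 : ∀ a : ZMod 2, a = 0 ∨ a = 1 := by decide
  rcases hZ2 (r.coeff 1) with h1 | h1 <;> rcases hZ2 (r.coeff 0) with h0 | h0 <;>
    simp [h0, h1, omg, add_comm]

lemma ncard_add_ncard_add_ncard {d n : ℕ} (u : Fin n → Rring d) :
    {t | u t = 0}.ncard + {t | u t = 1}.ncard + {t | u t = omg d ∨ u t = 1 + omg d}.ncard = n := by
  rw [Set.ncard_add_ncard_add_ncard_eq_card, Nat.card_eq_fintype_card, Fintype.card_fin]
  · exact fun t h0 h1 ↦ zero_ne_one (h0.symm.trans h1)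
  · rintro t h0 (h | h)
    · exact omg_ne_zero d (h.symm.trans h0)
    · exact one_add_omg_ne_zero d (h.symm.trans h0)
  · rintro t h1 (h | h)
    · exact omg_ne_one d (h.symm.trans h1)
    · exact one_add_omg_ne_one d (h.symm.trans h1)
  · intro t
    simpa [or_assoc] using eq_zero_or_eq_one_or_eq_omg_or_eq_one_add_omg (u t)

end Rring

lemma four_mul_Qform (d : ℕ) (x y : ℤ) :
    4 * Qform d x y = (2 * x + y) ^ 2 + (4 * d - 1) * y ^ 2 := by
  unfold Qform; ring

lemma coeff_cosetTheta (d k : ℕ) (a b : ℤ) :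
    PowerSeries.coeff k (cosetTheta d a b) =
      {mn : ℤ × ℤ | Qform d (2 * mn.1 + a) (2 * mn.2 + b) = k}.ncard :=
  PowerSeries.coeff_mk _ _

lemma coeff_zero_Az {d : ℕ} (hd : 1 ≤ d) : PowerSeries.coeff 0 (Az d) = 1 := by
  have hsol : {mn : ℤ × ℤ | Qform d (2 * mn.1 + 0) (2 * mn.2 + 0) = (0 : ℕ)} = {(0, 0)} := by
    ext ⟨m, n⟩
    have h4 := four_mul_Qform d (2 * m) (2 * n)
    have hd' : (1 : ℤ) ≤ d := by exact_mod_cast hd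
    simp only [add_zero, Set.mem_ofPred_eq, Set.mem_singleton_iff, Prod.mk.injEq, Nat.cast_zero]
    constructor
    · intro h
      have hn : n = 0 := by nlinarith [sq_nonneg (4 * m + 2 * n), sq_nonneg n]
      subst hn
      exact ⟨by nlinarith [sq_nonneg m], rfl⟩
    · rintro ⟨rfl, rfl⟩
      simp [Qform]
  rw [Az, coeff_cosetTheta, hsol, Set.ncard_singleton, Nat.cast_one]

lemma coeff_zero_Cz {d : ℕ} (hd : 1 ≤ d) : PowerSeries.coeff 0 (Cz d) = 0 := by
  have hsol : {mn : ℤ × ℤ | Qform d (2 * mn.1 + 1) (2 * mn.2 + 0) = (0 : ℕ)} = ∅ := by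
    refine Set.eq_empty_of_forall_notMem fun ⟨m, n⟩ h ↦ ?_
    have h4 := four_mul_Qform d (2 * m + 1) (2 * n)
    have hd' : (1 : ℤ) ≤ d := by exact_mod_cast hd
    simp only [add_zero, Set.mem_ofPred_eq, Nat.cast_zero] at h
    have hn : n = 0 := by nlinarith [sq_nonneg (4 * m + 2 + 2 * n), sq_nonneg n]
    subst hn
    have hsq : (2 * m + 1) ^ 2 = 0 := by simpa [Qform] using h
    have := pow_eq_zero_iff two_ne_zero |>.mp hsq
    omega
  rw [Cz, coeff_cosetTheta, hsol, Set.ncard_empty, Nat.cast_zero]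

lemma coeff_one_Cz {d : ℕ} (hd : 1 ≤ d) : PowerSeries.coeff 1 (Cz d) = 2 := by
  have hsol : {mn : ℤ × ℤ | Qform d (2 * mn.1 + 1) (2 * mn.2 + 0) = (1 : ℕ)} =
      {(0, 0), (-1, 0)} := by
    ext ⟨m, n⟩
    have h4 := four_mul_Qform d (2 * m + 1) (2 * n)
    have hd' : (1 : ℤ) ≤ d := by exact_mod_cast hd
    simp only [add_zero, Set.mem_ofPred_eq, Set.mem_insert_iff, Set.mem_singleton_iff,
      Prod.mk.injEq, Nat.cast_one]
    constructor
    · intro h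
      have hn : n = 0 := by
        by_contra hn
        have : 0 < n ^ 2 := by positivity
        nlinarith [sq_nonneg (4 * m + 2 + 2 * n)]
      subst hn
      have : m * (m + 1) = 0 := by unfold Qform at h; linarith
      rcases mul_eq_zero.mp this with hm | hm <;> omega
    · rintro (⟨rfl, rfl⟩ | ⟨rfl, rfl⟩) <;> simp [Qform]
  rw [Cz, coeff_cosetTheta, hsol, Set.ncard_pair (by simp)]
  rfl

lemma coeff_Gz_of_lt {d k : ℕ} (hk : k < d) : PowerSeries.coeff k (Gz d) = 0 := by
  have hsol : {mn : ℤ × ℤ | Qform d (2 * mn.1 + 0) (2 * mn.2 + 1) = k} = ∅ := by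
    refine Set.eq_empty_of_forall_notMem fun ⟨m, n⟩ h ↦ ?_
    have h4 := four_mul_Qform d (2 * m) (2 * n + 1)
    have hk' : (k : ℤ) + 1 ≤ d := by exact_mod_cast hk
    simp only [add_zero, Set.mem_ofPred_eq] at h
    have hodd : 2 * n + 1 ≠ 0 := by omega
    have : 0 < (2 * n + 1) ^ 2 := by positivity
    nlinarith [sq_nonneg (4 * m + 2 * n + 1)]
  rw [Gz, coeff_cosetTheta, hsol, Set.ncard_empty, Nat.cast_zero]

lemma coeff_Gz_self {d : ℕ} (hd : 1 ≤ d) : PowerSeries.coeff d (Gz d) = 2 := by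
  have hsol : {mn : ℤ × ℤ | Qform d (2 * mn.1 + 0) (2 * mn.2 + 1) = d} = {(0, 0), (0, -1)} := by
    ext ⟨m, n⟩
    have h4 := four_mul_Qform d (2 * m) (2 * n + 1)
    have hd' : (1 : ℤ) ≤ d := by exact_mod_cast hd
    simp only [add_zero, Set.mem_ofPred_eq, Set.mem_insert_iff, Set.mem_singleton_iff,
      Prod.mk.injEq]
    constructor
    · intro h
      have hn : n = 0 ∨ n = -1 := by
        by_contra! hn
        have : 9 ≤ (2 * n + 1) ^ 2 := by
          rcases le_or_gt 1 n with h' | h'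
          · nlinarith
          · nlinarith [show n ≤ -2 by omega]
        nlinarith [sq_nonneg (4 * m + 2 * n + 1)]
      rcases hn with rfl | rfl
      · have : m * (2 * m + 1) = 0 := by unfold Qform at h; linarith
        rcases mul_eq_zero.mp this with hm | hm <;> omega
      · have : m * (2 * m - 1) = 0 := by unfold Qform at h; linarith
        rcases mul_eq_zero.mp this with hm | hm <;> omega
    · rintro (⟨rfl, rfl⟩ | ⟨rfl, rfl⟩) <;> simp [Qform]
  rw [Gz, coeff_cosetTheta, hsol, Set.ncard_pair (by simp)]
  rfl

lemma order_Az {d : ℕ} (hd : 1 ≤ d) : (Az d).order = 0 := by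
  simpa using (PowerSeries.order_eq_nat (n := 0)).mpr ⟨by simp [coeff_zero_Az hd], by simp⟩

lemma order_Cz {d : ℕ} (hd : 1 ≤ d) : (Cz d).order = 1 := by
  simpa using (PowerSeries.order_eq_nat (n := 1)).mpr
    ⟨by simp [coeff_one_Cz hd], fun i hi ↦ by rw [Nat.lt_one_iff.mp hi, coeff_zero_Cz hd]⟩

lemma order_Gz {d : ℕ} (hd : 1 ≤ d) : (Gz d).order = d :=
  PowerSeries.order_eq_nat.mpr ⟨by simp [coeff_Gz_self hd], fun _ hk ↦ coeff_Gz_of_lt hk⟩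

theorem stmt8_general (n : ℕ) (ℓ : ℕ) (hmod : ℓ % 4 = 3) (hnl : 4 * n < ℓ + 1) (d : ℕ)
    (hd : d = (ℓ + 1) / 4) (C₁ C₂ : Submodule (Rring d) (Fin n → Rring d))
    (h : MvPolynomial.aeval ![Az d, Cz d, Gz d]
           (swe n (omg d) (C₁ : Set (Fin n → Rring d))) =
         MvPolynomial.aeval ![Az d, Cz d, Gz d]
           (swe n (omg d) (C₂ : Set (Fin n → Rring d)))) :
    swe n (omg d) (C₁ : Set (Fin n → Rring d)) =
      swe n (omg d) (C₂ : Set (Fin n → Rring d)) := by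
  have hnd : n < d := by omega
  have hd1 : 1 ≤ d := by omega
  have hswe (Co : Set (Fin n → Rring d)) : (swe n (omg d) Co).IsHomogeneous n :=
    isHomogeneous_swe fun u _ ↦ Rring.ncard_add_ncard_add_ncard u
  rw [← sub_eq_zero]
  refine ((hswe C₁).sub (hswe C₂)).eq_zero_of_aeval_eq_zero
    (order_Az hd1) (order_Cz hd1) (order_Gz hd1) hnd ?_
  rw [map_sub, h, sub_self]

theorem stmt8 (n : ℕ) (hn : 1 ≤ n) (ℓ : ℕ) (hℓpos : 0 < ℓ) (hsf : Squarefree ℓ)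
    (hmod : ℓ % 4 = 3) (hge : 2 * (n + 1) * (n + 2) ≤ n * (ℓ + 1)) (hnl : 4 * n < ℓ + 1)
    (d : ℕ) (hd : d = (ℓ + 1) / 4)
    (C₁ C₂ : Submodule (Rring d) (Fin n → Rring d))
    (h : MvPolynomial.aeval ![Az d, Cz d, Gz d]
           (swe n (omg d) (C₁ : Set (Fin n → Rring d))) =
         MvPolynomial.aeval ![Az d, Cz d, Gz d]
           (swe n (omg d) (C₂ : Set (Fin n → Rring d)))) :
    swe n (omg d) (C₁ : Set (Fin n → Rring d)) =
      swe n (omg d) (C₂ : Set (Fin n → Rring d)) :=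
  stmt8_general n ℓ hmod hnl d hd C₁ C₂ h
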